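/- arXiv:nlin/0004020 — 2 statements merged into one kernel-verified Lean document; each statement's English description precedes it below -/
import Mathlib

section
/- Let R ≥ 0, n ≥ 0 and N ≥ 1 be real numbers. Suppose that for every δ with 0 < δ ≤ 1 one has N ≤ 1/δ + δ·√(R·(N−1)·n). Then N ≤ 2^(4/3)·(R·n)^(1/3) + 1. -/
/-- Background-profile optimization step of Theorem 1 of Constantin, "Bounds for
Turbulent Transport": if the Nusselt number `N` satisfies, for every boundary layer
width `0 < δ ≤ 1`, the bound `N ≤ 1/δ + δ √(R (N-1) n)`, then
`N ≤ 2^(4/3) (R n)^(1/3) + 1`. -/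
theorem nusselt_cube_root_bound (R n N : ℝ) (hR : 0 ≤ R) (hn : 0 ≤ n) (hN : 1 ≤ N)
    (h : ∀ δ : ℝ, 0 < δ → δ ≤ 1 →
      N ≤ 1 / δ + δ * Real.sqrt (R * (N - 1) * n)) :
    N ≤ 2 ^ ((4 : ℝ) / 3) * (R * n) ^ ((1 : ℝ) / 3) + 1 := by
  have hM : 0 ≤ N - 1 := by linarith
  set A := Real.sqrt (R * (N - 1) * n) with hAdef
  have hA0 : 0 ≤ A := Real.sqrt_nonneg _
  have harg : 0 ≤ R * (N - 1) * n := by positivity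
  have hA2 : A ^ 2 = R * (N - 1) * n := Real.sq_sqrt harg
  -- key inequality
  have key : (N - 1) ^ 4 ≤ 16 * (R * (N - 1) * n) := by
    rcases le_or_gt 1 A with h1 | h1
    · have hsA1 : 1 ≤ Real.sqrt A := by
        rw [show (1:ℝ) = Real.sqrt 1 by simp]
        exact Real.sqrt_le_sqrt h1
      have hsA0 : 0 < Real.sqrt A := lt_of_lt_of_le one_pos hsA1
      have hδ := h (1 / Real.sqrt A) (by positivity)
        (by rw [div_le_one hsA0]; exact hsA1)
      have hmul : Real.sqrt A * Real.sqrt A = A := Real.mul_self_sqrt hA0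
      have e1 : 1 / (1 / Real.sqrt A) = Real.sqrt A := one_div_one_div _
      have e2 : (1 / Real.sqrt A) * A = Real.sqrt A := by
        field_simp
        rw [Real.sq_sqrt hA0]
      rw [e1, e2] at hδ
      -- N ≤ 2 √A
      have hN2 : N ^ 2 ≤ 4 * A := by nlinarith [hmul, Real.sqrt_nonneg A]
      have hN4 : N ^ 4 ≤ 16 * (R * (N - 1) * n) := by nlinarith [hA2, hA0]
      have : (N - 1) ^ 4 ≤ N ^ 4 := by
        apply pow_le_pow_left₀ hM; linarith
      linarith
    · have hδ := h 1 one_pos le_rfl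
      simp at hδ
      have hMA : N - 1 ≤ A := by linarith
      have h4 : (N - 1) ^ 4 ≤ A ^ 4 := pow_le_pow_left₀ hM hMA 4
      have hA21 : A ^ 2 ≤ 1 := by nlinarith
      have hA42 : A ^ 4 ≤ A ^ 2 := by nlinarith [sq_nonneg A, sq_nonneg (A^2)]
      linarith [harg]
  rcases eq_or_lt_of_le hM with heq | hpos
  · have : N = 1 := by linarith
    rw [this]
    have : (0:ℝ) ≤ 2 ^ ((4 : ℝ) / 3) * (R * n) ^ ((1 : ℝ) / 3) := by positivity
    linarith
  · have h3 : (N - 1) ^ 3 ≤ 16 * (R * n) := by nlinarith [key, hpos]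
    have hle : ((N - 1) ^ 3 : ℝ) ^ ((1:ℝ)/3) ≤ (16 * (R * n)) ^ ((1:ℝ)/3) :=
      Real.rpow_le_rpow (by positivity) h3 (by norm_num)
    have eM : ((N - 1) ^ 3 : ℝ) ^ ((1:ℝ)/3) = N - 1 := by
      rw [← Real.rpow_natCast (N - 1) 3, ← Real.rpow_mul hM]
      norm_num
    have eR : (16 * (R * n)) ^ ((1:ℝ)/3)
        = 2 ^ ((4 : ℝ) / 3) * (R * n) ^ ((1 : ℝ) / 3) := by
      rw [show (16:ℝ) = 2 ^ (4:ℝ) by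
        rw [show (4:ℝ) = ((4:ℕ):ℝ) by norm_num, Real.rpow_natCast]; norm_num]
      rw [Real.mul_rpow (by positivity) (by positivity),
        ← Real.rpow_mul (by norm_num : (0:ℝ) ≤ 2)]
      norm_num
    rw [eM, eR] at hle
    linarith
end

section
/- Let L > 0 and let f, g : ℝ³ → ℝ be continuously differentiable functions that are L-periodic in the first two variables and satisfy f(x,y,0) = 0 and g(x,y,0) = 0 for all (x,y) ∈ ℝ². Then for every z ∈ [0,1], | (1/L²)·∫₀^L∫₀^L f(x,y,z)·g(x,y,z) dx dy | ≤ z·‖∇f‖·‖∇g‖, where for a function F that is L-periodic in the first two variables, ‖F‖² = (1/L²)·∫₀^L∫₀^L∫₀^1 |F(x,y,z)|² dx dy dz. -/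
open MeasureTheory intervalIntegral Set

/-- Cauchy–Schwarz for Bochner integrals of real functions. -/
lemma cs_abs_integral {α : Type*} [MeasurableSpace α] (μ : Measure α) (u v : α → ℝ)
    (hu : AEStronglyMeasurable u μ) (hv : AEStronglyMeasurable v μ)
    (hu2 : Integrable (fun a => u a ^ 2) μ) (hv2 : Integrable (fun a => v a ^ 2) μ) :
    |∫ a, u a * v a ∂μ| ≤ Real.sqrt (∫ a, u a ^ 2 ∂μ) * Real.sqrt (∫ a, v a ^ 2 ∂μ) := by
  have h2 : Real.HolderConjugate 2 2 := Real.HolderConjugate.two_two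
  have hum : MemLp u 2 μ := (memLp_two_iff_integrable_sq hu).2 hu2
  have hvm : MemLp v 2 μ := (memLp_two_iff_integrable_sq hv).2 hv2
  have hsq : ∀ x : ℝ, ‖x‖ ^ (2:ℝ) = x ^ 2 := fun x => by
    rw [show (2:ℝ) = ((2:ℕ):ℝ) by norm_num, Real.rpow_natCast, Real.norm_eq_abs, sq_abs]
  calc |∫ a, u a * v a ∂μ| ≤ ∫ a, ‖u a‖ * ‖v a‖ ∂μ := by
        rw [← Real.norm_eq_abs]
        refine (MeasureTheory.norm_integral_le_integral_norm (fun a => u a * v a)).trans_eq ?_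
        simp [norm_mul]
    _ ≤ (∫ a, ‖u a‖ ^ (2:ℝ) ∂μ) ^ ((1:ℝ)/2) * (∫ a, ‖v a‖ ^ (2:ℝ) ∂μ) ^ ((1:ℝ)/2) := by
        refine integral_mul_norm_le_Lp_mul_Lq h2 ?_ ?_ <;>
          · rw [show ENNReal.ofReal (2:ℝ) = 2 by norm_num [ENNReal.ofReal]]
            assumption
    _ = _ := by
        rw [Real.sqrt_eq_rpow, Real.sqrt_eq_rpow]
        simp_rw [hsq]

/-- Cauchy–Schwarz for interval integrals of continuous functions. -/
lemma cs_intervalIntegral {b : ℝ} (hb : 0 ≤ b) {u v : ℝ → ℝ} (hu : Continuous u)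
    (hv : Continuous v) :
    |∫ t in (0:ℝ)..b, u t * v t| ≤
      Real.sqrt (∫ t in (0:ℝ)..b, u t ^ 2) * Real.sqrt (∫ t in (0:ℝ)..b, v t ^ 2) := by
  rw [intervalIntegral.integral_of_le hb, intervalIntegral.integral_of_le hb,
    intervalIntegral.integral_of_le hb]
  exact cs_abs_integral _ u v hu.aestronglyMeasurable.restrict hv.aestronglyMeasurable.restrict
    ((hu.pow 2).integrableOn_Ioc) ((hv.pow 2).integrableOn_Ioc)

section slices

variable {F : ℝ × ℝ × ℝ → ℝ} (hF : ContDiff ℝ 1 F)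
include hF

lemma hasDerivAt_slice1 (x y t : ℝ) :
    HasDerivAt (fun s => F (s, y, t)) (fderiv ℝ F (x, y, t) (1, 0, 0)) x := by
  have h1 : HasDerivAt (fun s : ℝ => ((s, y, t) : ℝ × ℝ × ℝ)) (1, 0, 0) x :=
    (hasDerivAt_id x).prodMk ((hasDerivAt_const x y).prodMk (hasDerivAt_const x t))
  exact ((hF.differentiable one_ne_zero _).hasFDerivAt).comp_hasDerivAt x h1

lemma hasDerivAt_slice2 (x y t : ℝ) :
    HasDerivAt (fun s => F (x, s, t)) (fderiv ℝ F (x, y, t) (0, 1, 0)) y := by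
  have h1 : HasDerivAt (fun s : ℝ => ((x, s, t) : ℝ × ℝ × ℝ)) (0, 1, 0) y :=
    (hasDerivAt_const y x).prodMk ((hasDerivAt_id y).prodMk (hasDerivAt_const y t))
  exact ((hF.differentiable one_ne_zero _).hasFDerivAt).comp_hasDerivAt y h1

lemma hasDerivAt_slice3 (x y t : ℝ) :
    HasDerivAt (fun s => F (x, y, s)) (fderiv ℝ F (x, y, t) (0, 0, 1)) t := by
  have h1 : HasDerivAt (fun s : ℝ => ((x, y, s) : ℝ × ℝ × ℝ)) (0, 0, 1) t :=
    (hasDerivAt_const t x).prodMk ((hasDerivAt_const t y).prodMk (hasDerivAt_id t))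
  exact ((hF.differentiable one_ne_zero _).hasFDerivAt).comp_hasDerivAt t h1

lemma continuous_fderiv_apply (v : ℝ × ℝ × ℝ) :
    Continuous fun p : ℝ × ℝ × ℝ => fderiv ℝ F p v :=
  (hF.continuous_fderiv one_ne_zero).clm_apply continuous_const

end slices

/-- Squared norm of the gradient of a function of three real variables. -/
noncomputable def gradSq (f : ℝ → ℝ → ℝ → ℝ) (x y z : ℝ) : ℝ :=
  (deriv (fun t => f t y z) x) ^ 2 + (deriv (fun t => f x t z) y) ^ 2 +
    (deriv (fun t => f x y t) z) ^ 2

/-- The squared `L²`-type norm `‖F‖² = (1/L²) ∫₀^L ∫₀^L ∫₀^1 F` over the period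
cell `[0,L]² × [0,1]` (applied to an already-squared integrand). -/
noncomputable def cellAvg (L : ℝ) (F : ℝ → ℝ → ℝ → ℝ) : ℝ :=
  (1 / L ^ 2) * ∫ x in (0:ℝ)..L, ∫ y in (0:ℝ)..L, ∫ z in (0:ℝ)..1, F x y z

section main

variable {f : ℝ → ℝ → ℝ → ℝ} (hf : ContDiff ℝ 1 fun p : ℝ × ℝ × ℝ => f p.1 p.2.1 p.2.2)
include hf

lemma gradSq_eq (x y z : ℝ) :
    gradSq f x y z =
      (fderiv ℝ (fun p : ℝ × ℝ × ℝ => f p.1 p.2.1 p.2.2) (x, y, z) (1, 0, 0)) ^ 2 +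
      (fderiv ℝ (fun p : ℝ × ℝ × ℝ => f p.1 p.2.1 p.2.2) (x, y, z) (0, 1, 0)) ^ 2 +
      (fderiv ℝ (fun p : ℝ × ℝ × ℝ => f p.1 p.2.1 p.2.2) (x, y, z) (0, 0, 1)) ^ 2 := by
  rw [gradSq, (hasDerivAt_slice1 hf x y z).deriv, (hasDerivAt_slice2 hf x y z).deriv,
    (hasDerivAt_slice3 hf x y z).deriv]

lemma continuous_gradSq : Continuous fun p : ℝ × ℝ × ℝ => gradSq f p.1 p.2.1 p.2.2 := by
  have : (fun p : ℝ × ℝ × ℝ => gradSq f p.1 p.2.1 p.2.2) =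
      fun p : ℝ × ℝ × ℝ =>
        (fderiv ℝ (fun p : ℝ × ℝ × ℝ => f p.1 p.2.1 p.2.2) p (1, 0, 0)) ^ 2 +
        (fderiv ℝ (fun p : ℝ × ℝ × ℝ => f p.1 p.2.1 p.2.2) p (0, 1, 0)) ^ 2 +
        (fderiv ℝ (fun p : ℝ × ℝ × ℝ => f p.1 p.2.1 p.2.2) p (0, 0, 1)) ^ 2 := by
    funext p
    exact gradSq_eq hf p.1 p.2.1 p.2.2
  rw [this]
  exact (((continuous_fderiv_apply hf _).pow 2).add
    ((continuous_fderiv_apply hf _).pow 2)).add ((continuous_fderiv_apply hf _).pow 2)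

lemma vert_bound (hf0 : ∀ x y : ℝ, f x y 0 = 0) {z : ℝ} (hz : z ∈ Set.Icc (0:ℝ) 1)
    (x y : ℝ) :
    f x y z ^ 2 ≤ z * ∫ t in (0:ℝ)..1, gradSq f x y t := by
  set D : ℝ → ℝ := fun t =>
    fderiv ℝ (fun p : ℝ × ℝ × ℝ => f p.1 p.2.1 p.2.2) (x, y, t) (0, 0, 1) with hD
  have hDc : Continuous D :=
    (continuous_fderiv_apply hf _).comp
      ((continuous_const.prodMk (continuous_const.prodMk continuous_id)))
  have hGc : Continuous fun t => gradSq f x y t :=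
    (continuous_gradSq hf).comp
      ((continuous_const.prodMk (continuous_const.prodMk continuous_id)))
  have hftc : ∫ t in (0:ℝ)..z, D t = f x y z := by
    rw [intervalIntegral.integral_eq_sub_of_hasDerivAt
      (fun t _ => hasDerivAt_slice3 hf x y t) (hDc.intervalIntegrable _ _), hf0, sub_zero]
  have hcs : |f x y z| ≤ Real.sqrt (∫ t in (0:ℝ)..z, D t ^ 2) * Real.sqrt z := by
    have := cs_intervalIntegral hz.1 hDc (continuous_const : Continuous fun _ : ℝ => (1:ℝ))
    simpa [hftc, one_pow, mul_comm] using this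
  have hDG : ∀ t : ℝ, D t ^ 2 ≤ gradSq f x y t := by
    intro t
    rw [gradSq_eq hf x y t]
    nlinarith [sq_nonneg (fderiv ℝ (fun p : ℝ × ℝ × ℝ => f p.1 p.2.1 p.2.2) (x, y, t) (1, 0, 0)),
      sq_nonneg (fderiv ℝ (fun p : ℝ × ℝ × ℝ => f p.1 p.2.1 p.2.2) (x, y, t) (0, 1, 0))]
  have hmono1 : ∫ t in (0:ℝ)..z, D t ^ 2 ≤ ∫ t in (0:ℝ)..z, gradSq f x y t :=
    intervalIntegral.integral_mono_on hz.1 ((hDc.pow 2).intervalIntegrable _ _)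
      (hGc.intervalIntegrable _ _) (fun t _ => hDG t)
  have hmono2 : ∫ t in (0:ℝ)..z, gradSq f x y t ≤ ∫ t in (0:ℝ)..1, gradSq f x y t := by
    refine intervalIntegral.integral_mono_interval le_rfl hz.1 hz.2 ?_
      (hGc.intervalIntegrable _ _)
    · filter_upwards with t
      simp only [Pi.zero_apply]
      nlinarith [hDG t, sq_nonneg (D t)]
  have h1 : f x y z ^ 2 ≤ (∫ t in (0:ℝ)..z, D t ^ 2) * z := by
    have hnn : 0 ≤ ∫ t in (0:ℝ)..z, D t ^ 2 :=
      intervalIntegral.integral_nonneg hz.1 (fun t _ => sq_nonneg _)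
    calc f x y z ^ 2 = |f x y z| ^ 2 := (sq_abs _).symm
      _ ≤ (Real.sqrt (∫ t in (0:ℝ)..z, D t ^ 2) * Real.sqrt z) ^ 2 := by
          exact pow_le_pow_left₀ (abs_nonneg _) hcs 2
      _ = (∫ t in (0:ℝ)..z, D t ^ 2) * z := by
          rw [mul_pow, Real.sq_sqrt hnn, Real.sq_sqrt hz.1]
  calc f x y z ^ 2 ≤ (∫ t in (0:ℝ)..z, D t ^ 2) * z := h1
    _ ≤ (∫ t in (0:ℝ)..1, gradSq f x y t) * z := by
        exact mul_le_mul_of_nonneg_right (hmono1.trans hmono2) hz.1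
    _ = z * ∫ t in (0:ℝ)..1, gradSq f x y t := mul_comm _ _

end main

/-- Inequality (una) of Constantin, "Bounds for Turbulent Transport": for `C¹`
functions `f, g`, horizontally `L`-periodic and vanishing at `z = 0`, the
horizontal average of `f·g` at height `z ∈ [0,1]` is bounded by
`z ‖∇f‖ ‖∇g‖`. -/
theorem horizontal_average_product_bound (L : ℝ) (hL : 0 < L) (f g : ℝ → ℝ → ℝ → ℝ)
    (hf : ContDiff ℝ 1 fun p : ℝ × ℝ × ℝ => f p.1 p.2.1 p.2.2)
    (hg : ContDiff ℝ 1 fun p : ℝ × ℝ × ℝ => g p.1 p.2.1 p.2.2)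
    (hfper : ∀ x y z : ℝ, f (x + L) y z = f x y z ∧ f x (y + L) z = f x y z)
    (hgper : ∀ x y z : ℝ, g (x + L) y z = g x y z ∧ g x (y + L) z = g x y z)
    (hf0 : ∀ x y : ℝ, f x y 0 = 0) (hg0 : ∀ x y : ℝ, g x y 0 = 0)
    (z : ℝ) (hz : z ∈ Set.Icc (0:ℝ) 1) :
    |(1 / L ^ 2) * ∫ x in (0:ℝ)..L, ∫ y in (0:ℝ)..L, f x y z * g x y z| ≤
      z * Real.sqrt (cellAvg L (gradSq f)) * Real.sqrt (cellAvg L (gradSq g)) := by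

  obtain ⟨hz0, hz1⟩ := hz
  have hL0 : (0:ℝ) ≤ L := hL.le
  have hL2 : (L:ℝ) ^ 2 ≠ 0 := pow_ne_zero 2 hL.ne'
  -- parametric continuity helper (inner integral in `y` over `[0,L]`)
  have key : ∀ H : ℝ × ℝ → ℝ, Continuous H →
      Continuous fun x : ℝ => ∫ y in (0:ℝ)..L, H (x, y) := by
    intro H hH
    exact intervalIntegral.continuous_parametric_intervalIntegral_of_continuous'
      (f := fun x y => H (x, y)) hH 0 L
  have key1 : ∀ H : ℝ × ℝ → ℝ, Continuous H →
      Continuous fun q : ℝ × ℝ => ∫ t in (0:ℝ)..1, H (q.1, t) := by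
    intro H hH
    exact intervalIntegral.continuous_parametric_intervalIntegral_of_continuous'
      (f := fun (q : ℝ × ℝ) (t : ℝ) => H (q.1, t)) (hH.comp (by fun_prop)) 0 1
  -- basic continuity of slices
  have hpr : Continuous fun q : ℝ × ℝ => ((q.1, q.2, z) : ℝ × ℝ × ℝ) := by fun_prop
  have hre : Continuous fun p : (ℝ × ℝ) × ℝ => ((p.1.1, p.1.2, p.2) : ℝ × ℝ × ℝ) := by fun_prop
  have hφ : Continuous fun q : ℝ × ℝ => f q.1 q.2 z := hf.continuous.comp hpr
  have hψ : Continuous fun q : ℝ × ℝ => g q.1 q.2 z := hg.continuous.comp hpr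
  -- gradient-integral functions
  set Jf : ℝ → ℝ := fun x => ∫ y in (0:ℝ)..L, ∫ t in (0:ℝ)..1, gradSq f x y t with hJf
  set Jg : ℝ → ℝ := fun x => ∫ y in (0:ℝ)..L, ∫ t in (0:ℝ)..1, gradSq g x y t with hJg
  have hGfc : Continuous fun q : ℝ × ℝ => ∫ t in (0:ℝ)..1, gradSq f q.1 q.2 t := by
    exact intervalIntegral.continuous_parametric_intervalIntegral_of_continuous'
      (f := fun (q : ℝ × ℝ) (t : ℝ) => gradSq f q.1 q.2 t)
      ((continuous_gradSq hf).comp hre) 0 1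
  have hGgc : Continuous fun q : ℝ × ℝ => ∫ t in (0:ℝ)..1, gradSq g q.1 q.2 t := by
    exact intervalIntegral.continuous_parametric_intervalIntegral_of_continuous'
      (f := fun (q : ℝ × ℝ) (t : ℝ) => gradSq g q.1 q.2 t)
      ((continuous_gradSq hg).comp hre) 0 1
  have hJfc : Continuous Jf := key _ hGfc
  have hJgc : Continuous Jg := key _ hGgc
  -- squared slice integrals
  set If : ℝ → ℝ := fun x => ∫ y in (0:ℝ)..L, f x y z ^ 2 with hIf
  set Ig : ℝ → ℝ := fun x => ∫ y in (0:ℝ)..L, g x y z ^ 2 with hIg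
  have hIfc : Continuous If := key _ (hφ.pow 2)
  have hIgc : Continuous Ig := key _ (hψ.pow 2)
  have hIf0 : ∀ x, 0 ≤ If x := fun x =>
    intervalIntegral.integral_nonneg hL0 fun y _ => sq_nonneg _
  have hIg0 : ∀ x, 0 ≤ Ig x := fun x =>
    intervalIntegral.integral_nonneg hL0 fun y _ => sq_nonneg _
  -- Step A : Cauchy-Schwarz over the horizontal square
  have hinnerc : Continuous fun x : ℝ => ∫ y in (0:ℝ)..L, f x y z * g x y z :=
    key _ (hφ.mul hψ)
  have hinner : ∀ x : ℝ, |∫ y in (0:ℝ)..L, f x y z * g x y z| ≤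
      Real.sqrt (If x) * Real.sqrt (Ig x) := fun x =>
    cs_intervalIntegral hL0
      (hφ.comp (show Continuous fun y : ℝ => ((x, y) : ℝ × ℝ) by fun_prop))
      (hψ.comp (show Continuous fun y : ℝ => ((x, y) : ℝ × ℝ) by fun_prop))
  have hsqIfc : Continuous fun x => Real.sqrt (If x) := Real.continuous_sqrt.comp hIfc
  have hsqIgc : Continuous fun x => Real.sqrt (Ig x) := Real.continuous_sqrt.comp hIgc
  have stepA : |∫ x in (0:ℝ)..L, ∫ y in (0:ℝ)..L, f x y z * g x y z| ≤
      Real.sqrt (∫ x in (0:ℝ)..L, If x) * Real.sqrt (∫ x in (0:ℝ)..L, Ig x) := by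
    calc |∫ x in (0:ℝ)..L, ∫ y in (0:ℝ)..L, f x y z * g x y z|
        ≤ ∫ x in (0:ℝ)..L, |∫ y in (0:ℝ)..L, f x y z * g x y z| :=
          intervalIntegral.abs_integral_le_integral_abs hL0
      _ ≤ ∫ x in (0:ℝ)..L, Real.sqrt (If x) * Real.sqrt (Ig x) :=
          intervalIntegral.integral_mono_on hL0 (hinnerc.abs.intervalIntegrable _ _)
            ((hsqIfc.mul hsqIgc).intervalIntegrable _ _) (fun x _ => hinner x)
      _ ≤ Real.sqrt (∫ x in (0:ℝ)..L, Real.sqrt (If x) ^ 2) *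
          Real.sqrt (∫ x in (0:ℝ)..L, Real.sqrt (Ig x) ^ 2) :=
          (le_abs_self _).trans (cs_intervalIntegral hL0 hsqIfc hsqIgc)
      _ = _ := by
          congr 1 <;> · congr 1; apply intervalIntegral.integral_congr
                        intro x _
                        first
                          | exact Real.sq_sqrt (hIf0 x)
                          | exact Real.sq_sqrt (hIg0 x)
  -- Step B : vertical bound
  have hvf : ∀ x y : ℝ, f x y z ^ 2 ≤ z * ∫ t in (0:ℝ)..1, gradSq f x y t :=
    vert_bound hf hf0 ⟨hz0, hz1⟩
  have hvg : ∀ x y : ℝ, g x y z ^ 2 ≤ z * ∫ t in (0:ℝ)..1, gradSq g x y t :=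
    vert_bound hg hg0 ⟨hz0, hz1⟩
  have hIfJ : ∀ x : ℝ, If x ≤ z * Jf x := by
    intro x
    have : (∫ y in (0:ℝ)..L, f x y z ^ 2) ≤
        ∫ y in (0:ℝ)..L, z * ∫ t in (0:ℝ)..1, gradSq f x y t := intervalIntegral.integral_mono_on hL0
      (((hφ.pow 2).comp (show Continuous fun y : ℝ => ((x, y) : ℝ × ℝ) by fun_prop)).intervalIntegrable _ _)
      ((continuous_const.mul (hGfc.comp (show Continuous fun y : ℝ => ((x, y) : ℝ × ℝ) by fun_prop))).intervalIntegrable _ _)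
      (fun y _ => hvf x y)
    simpa [intervalIntegral.integral_const_mul] using this
  have hIgJ : ∀ x : ℝ, Ig x ≤ z * Jg x := by
    intro x
    have : (∫ y in (0:ℝ)..L, g x y z ^ 2) ≤
        ∫ y in (0:ℝ)..L, z * ∫ t in (0:ℝ)..1, gradSq g x y t := intervalIntegral.integral_mono_on hL0
      (((hψ.pow 2).comp (show Continuous fun y : ℝ => ((x, y) : ℝ × ℝ) by fun_prop)).intervalIntegrable _ _)
      ((continuous_const.mul (hGgc.comp (show Continuous fun y : ℝ => ((x, y) : ℝ × ℝ) by fun_prop))).intervalIntegrable _ _)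
      (fun y _ => hvg x y)
    simpa [intervalIntegral.integral_const_mul] using this
  have hgradnn : ∀ (h : ℝ → ℝ → ℝ → ℝ) (x y t : ℝ), 0 ≤ gradSq h x y t := by
    intro h x y t; unfold gradSq; positivity
  have hJf0 : ∀ x, 0 ≤ Jf x := fun x =>
    intervalIntegral.integral_nonneg hL0 fun y _ =>
      intervalIntegral.integral_nonneg zero_le_one fun t _ => hgradnn f x y t
  have hJg0 : ∀ x, 0 ≤ Jg x := fun x =>
    intervalIntegral.integral_nonneg hL0 fun y _ =>
      intervalIntegral.integral_nonneg zero_le_one fun t _ => hgradnn g x y t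
  have hTf : ∫ x in (0:ℝ)..L, Jf x = L ^ 2 * cellAvg L (gradSq f) := by
    rw [cellAvg]; field_simp; rfl
  have hTg : ∫ x in (0:ℝ)..L, Jg x = L ^ 2 * cellAvg L (gradSq g) := by
    rw [cellAvg]; field_simp; rfl
  have hAf0 : 0 ≤ cellAvg L (gradSq f) := by
    have h1 : 0 ≤ ∫ x in (0:ℝ)..L, Jf x :=
      intervalIntegral.integral_nonneg hL0 fun x _ => hJf0 x
    rw [cellAvg]
    exact mul_nonneg (by positivity)
      (intervalIntegral.integral_nonneg hL0 fun x _ => hJf0 x)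
  have hAg0 : 0 ≤ cellAvg L (gradSq g) := by
    rw [cellAvg]
    exact mul_nonneg (by positivity)
      (intervalIntegral.integral_nonneg hL0 fun x _ => hJg0 x)
  have hsf : Real.sqrt (∫ x in (0:ℝ)..L, If x) ≤
      Real.sqrt z * (L * Real.sqrt (cellAvg L (gradSq f))) := by
    have h1 : ∫ x in (0:ℝ)..L, If x ≤ z * (L ^ 2 * cellAvg L (gradSq f)) := by
      rw [← hTf, ← intervalIntegral.integral_const_mul]
      exact intervalIntegral.integral_mono_on hL0 (hIfc.intervalIntegrable _ _)
        ((continuous_const.mul hJfc).intervalIntegrable _ _) (fun x _ => hIfJ x)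
    refine (Real.sqrt_le_sqrt h1).trans_eq ?_
    rw [Real.sqrt_mul hz0, Real.sqrt_mul (by positivity), Real.sqrt_sq hL0]
  have hsg : Real.sqrt (∫ x in (0:ℝ)..L, Ig x) ≤
      Real.sqrt z * (L * Real.sqrt (cellAvg L (gradSq g))) := by
    have h1 : ∫ x in (0:ℝ)..L, Ig x ≤ z * (L ^ 2 * cellAvg L (gradSq g)) := by
      rw [← hTg, ← intervalIntegral.integral_const_mul]
      exact intervalIntegral.integral_mono_on hL0 (hIgc.intervalIntegrable _ _)
        ((continuous_const.mul hJgc).intervalIntegrable _ _) (fun x _ => hIgJ x)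
    refine (Real.sqrt_le_sqrt h1).trans_eq ?_
    rw [Real.sqrt_mul hz0, Real.sqrt_mul (by positivity), Real.sqrt_sq hL0]
  have hzz : Real.sqrt z * Real.sqrt z = z := Real.mul_self_sqrt hz0
  calc |(1 / L ^ 2) * ∫ x in (0:ℝ)..L, ∫ y in (0:ℝ)..L, f x y z * g x y z|
      = (1 / L ^ 2) * |∫ x in (0:ℝ)..L, ∫ y in (0:ℝ)..L, f x y z * g x y z| := by
        rw [abs_mul, abs_of_nonneg (by positivity)]
    _ ≤ (1 / L ^ 2) * ((Real.sqrt z * (L * Real.sqrt (cellAvg L (gradSq f)))) *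
        (Real.sqrt z * (L * Real.sqrt (cellAvg L (gradSq g))))) := by
        refine mul_le_mul_of_nonneg_left ?_ (by positivity)
        refine stepA.trans (mul_le_mul hsf hsg (Real.sqrt_nonneg _) (by positivity))
    _ = z * Real.sqrt (cellAvg L (gradSq f)) * Real.sqrt (cellAvg L (gradSq g)) := by
        field_simp
        linear_combination (Real.sqrt (cellAvg L (gradSq f)) *
          Real.sqrt (cellAvg L (gradSq g))) * hzz
end
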